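/- Let (R,m) be a commutative Noetherian local ring, a and J ideals of R, and M a finitely generated R-module. Then CoSupp_R(F^i_{a,m,J}(M)) ⊆ V(a) for every integer i, where CoSupp_R(N) = { p ∈ Spec R : Hom_R(R_p, N) ≠ 0 } and V(a) is the set of prime ideals containing a. -/

import Mathlib

/-!
If `r ∈ a` lies outside the prime `p`, then `r ^ n` kills `M/aⁿM`, hence also
`H^i_{m,J}(M/aⁿM)`, because the derived functors of the `R`-linear functor `Γ_{m,J}` are
`R`-linear. Since `r` acts
invertibly on `R_p`, every map `R_p → F^i_{a,m,J}(M) ⊆ ∏ₙ H^i_{m,J}(M/aⁿM)` vanishes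
componentwise.
-/

/-!
Common definitions: local cohomology with respect to a pair of ideals `(I,J)`
(the right derived functors of the `(I,J)`-torsion functor `Γ_{I,J}`), formal local
cohomology `F^i_{a,I,J}(M) = lim←_n H^i_{I,J}(M/a^n M)` and Čech formal local cohomology
(the cohomology of the inverse limit of the complexes, obtained by applying `Γ_{I,J}`
degreewise to the canonical functorial injective resolutions of the modules `M/a^n M`),
together with the auxiliary notions used in the statements (formal filter depth,
attached and coassociated primes, cosupport, secondary representations, Krull dimension
of a module, arithmetic rank, grade, projective dimension, cohomological dimension).
-/

open CategoryTheory

namespace FLC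

variable {R : Type} [CommRing R]

/-- The `(I,J)`-torsion submodule `Γ_{I,J}(M) = { x | I^n x ⊆ J x for some n }`,
equivalently `{ x | I^n ≤ J + Ann(x) for some n }`. -/
def pairTorsion (I J : Ideal R) (M : Type) [AddCommGroup M] [Module R M] :
    Submodule R M where
  carrier := { x | ∃ n : ℕ, I ^ n ≤ J ⊔ (Submodule.span R {x}).annihilator }
  zero_mem' := ⟨0, by
    simp [Submodule.span_zero_singleton, Submodule.annihilator_bot]⟩
  add_mem' := by
    rintro x y ⟨n, hn⟩ ⟨m, hm⟩
    refine ⟨n + m, ?_⟩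
    have h1 : (Submodule.span R {x}).annihilator ⊓ (Submodule.span R {y}).annihilator ≤
        (Submodule.span R {x + y}).annihilator := by
      intro r hr
      rw [Submodule.mem_inf, Submodule.mem_annihilator_span_singleton,
        Submodule.mem_annihilator_span_singleton] at hr
      rw [Submodule.mem_annihilator_span_singleton, smul_add, hr.1, hr.2, add_zero]
    have hmul : (J ⊔ (Submodule.span R {x}).annihilator) *
        (J ⊔ (Submodule.span R {y}).annihilator) ≤
        J ⊔ ((Submodule.span R {x}).annihilator ⊓ (Submodule.span R {y}).annihilator) := by
      rw [Submodule.mul_le]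
      intro a ha b hb
      obtain ⟨j, hj, a', ha', rfl⟩ := Submodule.mem_sup.mp ha
      obtain ⟨j', hj', b', hb', rfl⟩ := Submodule.mem_sup.mp hb
      have heq : (j + a') * (j' + b') = (j * (j' + b') + a' * j') + a' * b' := by ring
      rw [heq]
      exact Submodule.add_mem_sup
        (Ideal.add_mem J (Ideal.mul_mem_right _ J hj) (Ideal.mul_mem_left _ _ hj'))
        (Submodule.mem_inf.mpr ⟨Ideal.mul_mem_right _ _ ha', Ideal.mul_mem_left _ _ hb'⟩)
    calc I ^ (n + m) = I ^ n * I ^ m := pow_add I n m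
      _ ≤ _ := Ideal.mul_mono hn hm
      _ ≤ _ := hmul
      _ ≤ _ := sup_le_sup_left h1 J
  smul_mem' := by
    rintro r x ⟨n, hn⟩
    refine ⟨n, hn.trans (sup_le_sup_left (Submodule.annihilator_mono ?_) J)⟩
    rw [Submodule.span_le]
    rintro z rfl
    exact Submodule.smul_mem _ r (Submodule.mem_span_singleton_self x)

theorem mapsTo_pairTorsion (I J : Ideal R) {M N : Type} [AddCommGroup M] [Module R M]
    [AddCommGroup N] [Module R N] (f : M →ₗ[R] N) (x : M) (hx : x ∈ pairTorsion I J M) :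
    f x ∈ pairTorsion I J N := by
  obtain ⟨n, hn⟩ := hx
  refine ⟨n, hn.trans (sup_le_sup_left ?_ J)⟩
  intro r hr
  rw [Submodule.mem_annihilator_span_singleton] at hr ⊢
  rw [← map_smul, hr, map_zero]

/-- `Γ_{I,J}` as an endofunctor of the category of `R`-modules. -/
def gammaFunctor (I J : Ideal R) : ModuleCat R ⥤ ModuleCat R where
  obj M := ModuleCat.of R (pairTorsion I J M)
  map {M N} f := ModuleCat.ofHom (f.hom.restrict (fun x hx => mapsTo_pairTorsion I J f.hom x hx))
  map_id M := by ext x; rfl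
  map_comp f g := by ext x; rfl

instance (I J : Ideal R) : (gammaFunctor I J).Additive where
  map_add := @fun X Y f g => by ext x; rfl

/-- Local cohomology `H^i_{I,J}` with respect to the pair of ideals `(I,J)`:
the `i`-th right derived functor of the torsion functor `Γ_{I,J}`.  For `J = 0` this
is ordinary local cohomology `H^i_I`. -/
noncomputable def pairLocalCohomology (I J : Ideal R) (i : ℕ) : ModuleCat R ⥤ ModuleCat R :=
  (gammaFunctor I J).rightDerived i

/-- The local cohomology module `H^i_{I,J}(M)`. -/
noncomputable abbrev pairLocalCohomologyModule (I J : Ideal R) (i : ℕ) (M : Type)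
    [AddCommGroup M] [Module R M] : ModuleCat R :=
  (pairLocalCohomology I J i).obj (ModuleCat.of R M)

/-- Ordinary local cohomology `H^i_I(M)`, i.e. local cohomology with respect to the
pair `(I, 0)`. -/
noncomputable abbrev localCohomologyModule (I : Ideal R) (i : ℕ) (M : Type)
    [AddCommGroup M] [Module R M] : ModuleCat R :=
  pairLocalCohomologyModule I ⊥ i M

/-- The inverse limit of a tower of modules indexed by `ℕ`. -/
def InvLim (X : ℕ → Type) [∀ n, AddCommGroup (X n)] [∀ n, Module R (X n)]
    (T : ∀ n, X (n + 1) →ₗ[R] X n) : Submodule R (∀ n, X n) where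
  carrier := { f | ∀ n, T n (f (n + 1)) = f n }
  zero_mem' := fun n => map_zero _
  add_mem' := by intro f g hf hg n; simp [map_add, hf n, hg n]
  smul_mem' := by intro r f hf n; simp [map_smul, hf n]

lemma mem_InvLim (X : ℕ → Type) [∀ n, AddCommGroup (X n)] [∀ n, Module R (X n)]
    (T : ∀ n, X (n + 1) →ₗ[R] X n) (f : ∀ n, X n) :
    f ∈ InvLim X T ↔ ∀ n, T n (f (n + 1)) = f n := Iff.rfl

/-- The natural projection `M/a^{n+1}M → M/a^nM`. -/
def quotProjₗ (a : Ideal R) (M : Type) [AddCommGroup M] [Module R M] (n : ℕ) :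
    (M ⧸ (a ^ (n + 1) • ⊤ : Submodule R M)) →ₗ[R] (M ⧸ (a ^ n • ⊤ : Submodule R M)) :=
  Submodule.mapQ _ _ LinearMap.id (by
    intro x hx
    exact Submodule.smul_mono_left (Ideal.pow_le_pow_right (Nat.le_succ n)) hx)

/-- The natural projection as a morphism in `ModuleCat R`. -/
def quotProj (a : Ideal R) (M : Type) [AddCommGroup M] [Module R M] (n : ℕ) :
    ModuleCat.of R (M ⧸ (a ^ (n + 1) • ⊤ : Submodule R M)) ⟶
      ModuleCat.of R (M ⧸ (a ^ n • ⊤ : Submodule R M)) :=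
  ModuleCat.ofHom (quotProjₗ a M n)

/-- The `i`-th formal local cohomology `F^i_{a,I,J}(M)` of `M` with respect to `a` and
the pair of ideals `(I,J)`: the inverse limit of the natural projective system
`{H^i_{I,J}(M/a^n M)}_n`. -/
noncomputable def formalLocalCohomology (a I J : Ideal R) (i : ℕ) (M : Type)
    [AddCommGroup M] [Module R M] :
    Submodule R (∀ n : ℕ, (pairLocalCohomology I J i).obj
      (ModuleCat.of R (M ⧸ (a ^ n • ⊤ : Submodule R M)))) :=
  InvLim _ (fun n => ((pairLocalCohomology I J i).map (quotProj a M n)).hom)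

/-! ### The Čech formal local cohomology -/

/-- The double character module `N ↦ (N⋆)⋆`; an injective `R`-module in which `N`
canonically embeds. -/
abbrev DD (N : Type) [AddCommGroup N] [Module R N] : Type :=
  CharacterModule (CharacterModule N)

variable (R) in
/-- The canonical evaluation embedding of a module into its double character module. -/
def eval (N : Type) [AddCommGroup N] [Module R N] : N →ₗ[R] DD (R := R) N where
  toFun x :=
    { toFun := fun c => c x
      map_zero' := rfl
      map_add' := fun c₁ c₂ => rfl }
  map_add' x y := by ext c; exact map_add c x y
  map_smul' r x := by ext c; rfl

/-- The tower of cosyzygies of the canonical functorial injective resolution of `N` built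
from double character modules: `K 0 = N` and `K (j+1) = (K j)⋆⋆ / K j`. -/
noncomputable def tower (N : Type) [AddCommGroup N] [Module R N] : ℕ → ModuleCat R
  | 0 => ModuleCat.of R N
  | (j + 1) => ModuleCat.of R
      ((DD (R := R) (tower N j)) ⧸ LinearMap.range (eval R (tower N j)))

/-- The terms of the canonical functorial injective resolution of `N`:
`C^j = (K j)⋆⋆` where `K` is the cosyzygy tower. -/
noncomputable abbrev resTerm (N : Type) [AddCommGroup N] [Module R N] (j : ℕ) : Type :=
  DD (R := R) (tower N j : ModuleCat R)

/-- The differential of the canonical injective resolution. -/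
noncomputable def resD (N : Type) [AddCommGroup N] [Module R N] (j : ℕ) :
    resTerm (R := R) N j →ₗ[R] resTerm (R := R) N (j + 1) :=
  (eval R (tower N (j+1))).comp (LinearMap.range (eval R (tower N j))).mkQ

/-- Functoriality of the double character module. -/
noncomputable def DDmap {A B : Type} [AddCommGroup A] [Module R A] [AddCommGroup B]
    [Module R B] (f : A →ₗ[R] B) : DD (R := R) A →ₗ[R] DD (R := R) B :=
  CharacterModule.dual (CharacterModule.dual f)

lemma DDmap_eval {A B : Type} [AddCommGroup A] [Module R A] [AddCommGroup B]
    [Module R B] (f : A →ₗ[R] B) (x : A) :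
    DDmap f (eval R A x) = eval R B (f x) := by
  ext c; rfl

/-- Functoriality of the cosyzygy tower. -/
noncomputable def towMap {N N' : Type} [AddCommGroup N] [Module R N] [AddCommGroup N']
    [Module R N'] (f : N →ₗ[R] N') :
    ∀ j, (tower N j : ModuleCat R) →ₗ[R] (tower N' j : ModuleCat R)
  | 0 => f
  | (j + 1) => Submodule.mapQ _ _ (DDmap (towMap f j)) (by
      rintro x ⟨y, rfl⟩
      exact ⟨towMap f j y, (DDmap_eval (towMap f j) y).symm⟩)

/-- Functoriality of the canonical injective resolution. -/
noncomputable def resMap {N N' : Type} [AddCommGroup N] [Module R N] [AddCommGroup N']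
    [Module R N'] (f : N →ₗ[R] N') (j : ℕ) :
    resTerm (R := R) N j →ₗ[R] resTerm (R := R) N' j :=
  DDmap (towMap f j)

lemma resMap_resD {N N' : Type} [AddCommGroup N] [Module R N] [AddCommGroup N']
    [Module R N'] (f : N →ₗ[R] N') (j : ℕ) (x : resTerm (R := R) N j) :
    resMap f (j + 1) (resD N j x) = resD N' j (resMap f j x) := by
  show DDmap (towMap f (j+1)) (eval R _ ((LinearMap.range (eval R (tower N j))).mkQ x)) = _
  refine (DDmap_eval (R := R) (towMap f (j+1))
    ((LinearMap.range (eval R (tower N j))).mkQ x)).trans ?_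
  rfl

/-- The restriction of a linear map to the `(I,J)`-torsion submodules. -/
def gammaRestrict (I J : Ideal R) {A B : Type} [AddCommGroup A] [Module R A]
    [AddCommGroup B] [Module R B] (f : A →ₗ[R] B) :
    pairTorsion I J A →ₗ[R] pairTorsion I J B :=
  f.restrict (fun x hx => mapsTo_pairTorsion I J f x hx)

/-- The `j`-th term of the inverse limit (over `n`) of the complexes
`Γ_{I,J}(canonical injective resolution of M/a^n M)`. -/
noncomputable def cechTerm (a I J : Ideal R) (M : Type) [AddCommGroup M] [Module R M]
    (j : ℕ) : Type :=
  InvLim (fun n => pairTorsion I J (resTerm (R := R) (M ⧸ (a ^ n • ⊤ : Submodule R M)) j))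
    (fun n => gammaRestrict I J (resMap (quotProjₗ a M n) j))

noncomputable instance (a I J : Ideal R) (M : Type) [AddCommGroup M] [Module R M] (j : ℕ) :
    AddCommGroup (cechTerm a I J M j) := by
  delta cechTerm; infer_instance
noncomputable instance (a I J : Ideal R) (M : Type) [AddCommGroup M] [Module R M] (j : ℕ) :
    Module R (cechTerm a I J M j) := by
  delta cechTerm; infer_instance

/-- The differential of the limit complex. -/
noncomputable def cechD (a I J : Ideal R) (M : Type) [AddCommGroup M] [Module R M]
    (j : ℕ) : cechTerm a I J M j →ₗ[R] cechTerm a I J M (j + 1) where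
  toFun f := ⟨fun n => gammaRestrict I J (resD _ j) (f.1 n), by
    rw [mem_InvLim]
    intro n
    apply Subtype.ext
    show resMap (quotProjₗ a M n) (j + 1) ((resD _ j) (f.1 (n+1)).1) = (resD _ j) (f.1 n).1
    rw [resMap_resD]
    congr 1
    exact congrArg Subtype.val ((mem_InvLim _ _ f.1).mp f.2 n)⟩
  map_add' f g := by
    apply Subtype.ext
    funext n
    exact map_add (gammaRestrict I J (resD _ j)) _ _
  map_smul' r f := by
    apply Subtype.ext
    funext n
    exact map_smul (gammaRestrict I J (resD _ j)) r _

/-- The boundaries in degree `i` of the limit complex. -/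
noncomputable def cechPrev (a I J : Ideal R) (M : Type) [AddCommGroup M] [Module R M] :
    ∀ i : ℕ, Submodule R (cechTerm a I J M i)
  | 0 => ⊥
  | (i + 1) => LinearMap.range (cechD a I J M i)

/-- The `i`-th Čech formal local cohomology `F̌^i_{a,I,J}(M)` of `M` with respect to `a`
and the pair of ideals `(I,J)`: the `i`-th cohomology of the inverse limit (over `n`) of
the complexes computing `H_{I,J}(M/a^n M)` (the `(I,J)`-torsion parts of the canonical
functorial injective resolutions of the modules `M/a^n M`). -/
noncomputable def cechFormalLocalCohomology (a I J : Ideal R) (i : ℕ) (M : Type)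
    [AddCommGroup M] [Module R M] : Type :=
  LinearMap.ker (cechD a I J M i) ⧸
    Submodule.comap (LinearMap.ker (cechD a I J M i)).subtype (cechPrev a I J M i)

noncomputable instance (a I J : Ideal R) (i : ℕ) (M : Type) [AddCommGroup M] [Module R M] :
    AddCommGroup (cechFormalLocalCohomology a I J i M) := by
  delta cechFormalLocalCohomology; infer_instance
noncomputable instance (a I J : Ideal R) (i : ℕ) (M : Type) [AddCommGroup M] [Module R M] :
    Module R (cechFormalLocalCohomology a I J i M) := by
  delta cechFormalLocalCohomology; infer_instance

/-! ### Auxiliary notions -/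

/-- The formal filter depth `ff-depth(a,I,J,M)`: the least integer `i` such that
`F^i_{a,I,J}(M)` is not Artinian (`∞` if there is no such `i`). -/
noncomputable def ffDepth (a I J : Ideal R) (M : Type) [AddCommGroup M] [Module R M] : ℕ∞ :=
  sInf ((↑) '' { i : ℕ | ¬ IsArtinian R (formalLocalCohomology a I J i M) })

/-- The greatest integer `i` such that `F̌^i_{a,I,J}(M)` is not Artinian
(`gǧ-depth`). -/
noncomputable def ggCechDepth (a I J : Ideal R) (M : Type) [AddCommGroup M] [Module R M] :
    ℕ∞ :=
  sSup ((↑) '' { i : ℕ | ¬ IsArtinian R (cechFormalLocalCohomology a I J i M) })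

/-- The least integer `i` such that `F̌^i_{a,I,J}(M)` is not Artinian (`fǧ-depth`). -/
noncomputable def ffCechDepth (a I J : Ideal R) (M : Type) [AddCommGroup M] [Module R M] :
    ℕ∞ :=
  sInf ((↑) '' { i : ℕ | ¬ IsArtinian R (cechFormalLocalCohomology a I J i M) })

/-- `f-depth(b, M)`: the least integer `i` such that `H^i_b(M)` is not Artinian. -/
noncomputable def fDepth (b : Ideal R) (M : Type) [AddCommGroup M] [Module R M] : ℕ∞ :=
  sInf ((↑) '' { i : ℕ | ¬ IsArtinian R (localCohomologyModule b i M) })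

/-- The cohomological dimension `cd(I, M) = sup { i | H^i_I(M) ≠ 0 }`. -/
noncomputable def cohomologicalDim (I : Ideal R) (M : Type) [AddCommGroup M] [Module R M] :
    ℕ∞ :=
  sSup ((↑) '' { i : ℕ | Nontrivial (localCohomologyModule I i M) })

/-- The (Krull) dimension of a module, `dim M = dim R/Ann(M)`. -/
noncomputable def moduleDim (R : Type) [CommRing R] (M : Type) [AddCommGroup M]
    [Module R M] : WithBot ℕ∞ :=
  ringKrullDim (R ⧸ Module.annihilator R M)

/-- `(0 :_R x)`, the annihilator of an element of a module. -/
def elemAnn {M : Type} [AddCommGroup M] [Module R M] (x : M) : Ideal R :=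
  (Submodule.span R {x}).annihilator

/-- The attached primes of a module `N`: a prime `p` is attached to `N` if for every
finitely generated ideal `b ⊆ p` there exists `x ∈ N` with `b ⊆ (0 :_R x) ⊆ p`. -/
def attachedPrimes (N : Type) [AddCommGroup N] [Module R N] : Set (PrimeSpectrum R) :=
  { p | ∀ b : Ideal R, b.FG → b ≤ p.asIdeal →
      ∃ x : N, b ≤ elemAnn x ∧ elemAnn x ≤ p.asIdeal }

/-- A module is cocyclic if it has a (necessarily unique) smallest non-zero submodule;
equivalently, if it embeds into the injective hull of the residue field of some maximal
ideal. -/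
def IsCocyclic (L : Type) [AddCommGroup L] [Module R L] : Prop :=
  ∃ S : Submodule R L, S ≠ ⊥ ∧ ∀ T : Submodule R L, T ≠ ⊥ → S ≤ T

/-- The coassociated primes of a module `N`: the primes of the form `Ann_R(L)` for a
cocyclic homomorphic image `L` of `N`. -/
def coassociatedPrimes (N : Type) [AddCommGroup N] [Module R N] : Set (PrimeSpectrum R) :=
  { p | ∃ K : Submodule R N, IsCocyclic (R := R) (N ⧸ K) ∧
      p.asIdeal = Module.annihilator R (N ⧸ K) }

/-- The cosupport of a module `N`:
`CoSupp(N) = { p ∈ Spec R | Hom_R(R_p, N) ≠ 0 }`. -/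
def coSupport (N : Type) [AddCommGroup N] [Module R N] : Set (PrimeSpectrum R) :=
  { p | ∃ f : Localization.AtPrime p.asIdeal →ₗ[R] N, f ≠ 0 }

/-- A module `S` is secondary if it is non-zero and for every `r : R`, multiplication by
`r` on `S` is either surjective or nilpotent. -/
def IsSecondary (S : Type) [AddCommGroup S] [Module R S] : Prop :=
  Nontrivial S ∧ ∀ r : R,
    Function.Surjective (fun x : S => r • x) ∨ ∃ n : ℕ, ∀ x : S, r ^ n • x = 0

/-- A module is representable if it is a (finite) sum of secondary submodules. -/
def IsRepresentable (N : Type) [AddCommGroup N] [Module R N] : Prop :=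
  ∃ (k : ℕ) (S : Fin k → Submodule R N),
    (∀ j, IsSecondary (R := R) (S j)) ∧ (⨆ j, S j) = ⊤

/-- The arithmetic rank `ara(b/a)`: the least number `n` of elements `y₁, …, yₙ` of `R`
such that `Rad(a + (y₁, …, yₙ)) = Rad(b)`. -/
noncomputable def araRel (a b : Ideal R) : ℕ∞ :=
  sInf ((↑) '' { n : ℕ | ∃ y : Fin n → R,
    (a ⊔ Ideal.span (Set.range y)).radical = b.radical })

/-- The grade of an ideal `J` on `R`: `grade(J, R) = inf { i | Ext^i_R(R/J, R) ≠ 0 }`. -/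
noncomputable def gradeIdeal (J : Ideal R) : ℕ∞ :=
  sInf ((↑) '' { i : ℕ | Nontrivial
    (((Ext R (ModuleCat R) i).obj (Opposite.op (ModuleCat.of R (R ⧸ J)))).obj
      (ModuleCat.of R R)) })

/-- The projective dimension of a module `N`:
`pd(N) = sup { i | Ext^i_R(N, L) ≠ 0 for some L }`. -/
noncomputable def projDim (N : Type) [AddCommGroup N] [Module R N] : ℕ∞ :=
  sSup ((↑) '' { i : ℕ | ∃ L : ModuleCat R, Nontrivial
    (((Ext R (ModuleCat R) i).obj (Opposite.op (ModuleCat.of R N))).obj L) })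

end FLC

open FLC

namespace HomologicalComplex

variable {R C ι : Type*} [Semiring R] [Category C] [Preadditive C] [Linear R C]
  {c : ComplexShape ι}

lemma homologyMap_smul {K L : HomologicalComplex C c} (f : K ⟶ L) (r : R) (i : ι)
    [K.HasHomology i] [L.HasHomology i] :
    homologyMap (r • f) i = r • homologyMap f i :=
  ShortComplex.homologyMap_smul ((shortComplexFunctor C c i).map f) r

instance homologyFunctor_linear [CategoryWithHomology C] (i : ι) :
    (homologyFunctor C c i).Linear R where
  map_smul f r := homologyMap_smul f r i

instance single_linear [Limits.HasZeroObject C] [DecidableEq ι] (j : ι) :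
    (single C c j).Linear R where
  map_smul f r := by
    ext
    simp only [single_map_f_self, smul_f_apply, Linear.smul_comp, Linear.comp_smul]

end HomologicalComplex

instance HomotopyCategory.homologyFunctor_linear {R C ι : Type*} [Semiring R] [Category C]
    [Preadditive C] [Linear R C] [CategoryWithHomology C] (c : ComplexShape ι) (i : ι) :
    (homologyFunctor C c i).Linear R :=
  have := Functor.linear_of_iso R (homologyFunctorFactors C c i).symm
  (quotient C c).linear_of_full_essSurj_comp _

instance injectiveResolutions_linear {R C : Type*} [Semiring R] [Category C] [Abelian C]
    [Linear R C] [HasInjectiveResolutions C] : (injectiveResolutions C).Linear R where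
  map_smul {X Y} f r := by
    change (HomotopyCategory.quotient C _).map (InjectiveResolution.desc (r • f) _ _) =
      r • (HomotopyCategory.quotient C _).map (InjectiveResolution.desc f _ _)
    rw [← Functor.map_smul]
    apply HomotopyCategory.eq_of_homotopy
    apply InjectiveResolution.descHomotopy (r • f)
    · exact InjectiveResolution.desc_commutes _ _ _
    · rw [Linear.comp_smul, InjectiveResolution.desc_commutes, Functor.map_smul,
        Linear.smul_comp]

instance Functor.rightDerived_linear {R C D : Type*} [Semiring R] [Category C] [Abelian C]
    [Linear R C] [HasInjectiveResolutions C] [Category D] [Abelian D] [Linear R D]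
    (F : C ⥤ D) [F.Additive] [F.Linear R] (n : ℕ) : (F.rightDerived n).Linear R :=
  inferInstanceAs (Functor.Linear R (injectiveResolutions C ⋙ F.mapHomotopyCategory _ ⋙ _))

lemma Module.annihilator_le_annihilator_obj {R : Type*} [CommRing R]
    (G : ModuleCat R ⥤ ModuleCat R) [G.Linear R] (N : ModuleCat R) :
    Module.annihilator R N ≤ Module.annihilator R (G.obj N) := by
  intro r hr
  have hN : r • 𝟙 N = (0 : R) • 𝟙 N := by
    ext y
    exact (Module.mem_annihilator.mp hr y).trans (zero_smul R y).symm
  rw [Module.mem_annihilator]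
  intro x
  change (r • 𝟙 (G.obj N)) x = 0
  rw [← G.map_id, ← G.map_smul, hN, G.map_smul, zero_smul]
  rfl

lemma Submodule.le_annihilator_quotient_smul_top {R M : Type*} [CommRing R] [AddCommGroup M]
    [Module R M] (I : Ideal R) : I ≤ Module.annihilator R (M ⧸ I • (⊤ : Submodule R M)) := by
  intro r hr
  rw [Module.mem_annihilator]
  rintro ⟨m⟩
  exact (Submodule.Quotient.mk_eq_zero _).mpr (Submodule.smul_mem_smul hr Submodule.mem_top)

lemma Localization.linearMap_eq_zero_of_mem_annihilator {R : Type*} [CommRing R]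
    {S : Submonoid R} {X : Type*} [AddCommGroup X] [Module R X]
    (f : Localization S →ₗ[R] X) {s : R} (hsS : s ∈ S) (hsX : s ∈ Module.annihilator R X) :
    f = 0 := by
  obtain ⟨u, hu⟩ := IsLocalization.map_units (Localization S) (⟨s, hsS⟩ : S)
  ext x
  have hx : x = s • ((u⁻¹ : (Localization S)ˣ) * x) := by
    rw [Algebra.smul_def, ← hu, Units.mul_inv_cancel_left]
  rw [hx, map_smul, Module.mem_annihilator.mp hsX, LinearMap.zero_apply]

namespace FLC

variable {R : Type} [CommRing R]

lemma coSupport_subset_zeroLocus_of_pow_le_annihilator {X : ℕ → Type}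
    [∀ n, AddCommGroup (X n)] [∀ n, Module R (X n)] (N : Submodule R (∀ n, X n)) (a : Ideal R)
    (h : ∀ n, ∃ k, a ^ k ≤ Module.annihilator R (X n)) :
    coSupport N ⊆ PrimeSpectrum.zeroLocus (a : Set R) := by
  rintro p ⟨f, hf⟩
  by_contra hpa
  obtain ⟨r, hra, hrp⟩ := Set.not_subset.mp hpa
  refine hf (LinearMap.ext fun x => Subtype.ext (funext fun n => ?_))
  obtain ⟨k, hk⟩ := h n
  have hfn := Localization.linearMap_eq_zero_of_mem_annihilator
    ((LinearMap.proj n).comp (N.subtype.comp f)) (s := r ^ k)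
    (p.asIdeal.primeCompl.pow_mem hrp k) (hk (Ideal.pow_mem_pow hra k))
  exact LinearMap.congr_fun hfn x

instance gammaFunctor_linear (I J : Ideal R) : (gammaFunctor I J).Linear R where
  map_smul _ _ := rfl

instance pairLocalCohomology_linear (I J : Ideal R) (i : ℕ) :
    (pairLocalCohomology I J i).Linear R :=
  Functor.rightDerived_linear _ i

end FLC

variable {R : Type} [CommRing R] [IsNoetherianRing R] [IsLocalRing R]

theorem statement18_general (a J : Ideal R) (M : Type) [AddCommGroup M] [Module R M] (i : ℕ) :
    coSupport (R := R) (formalLocalCohomology a (IsLocalRing.maximalIdeal R) J i M) ⊆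
      PrimeSpectrum.zeroLocus (a : Set R) :=
  coSupport_subset_zeroLocus_of_pow_le_annihilator _ a fun n =>
    ⟨n, (Submodule.le_annihilator_quotient_smul_top (M := M) _).trans
      (Module.annihilator_le_annihilator_obj _ (ModuleCat.of R _))⟩

/-- `CoSupp_R(F^i_{a,m,J}(M)) ⊆ V(a)` for every `i`. -/
theorem statement18 (a J : Ideal R) (M : Type) [AddCommGroup M] [Module R M]
    [Module.Finite R M] (i : ℕ) :
    coSupport (R := R) (formalLocalCohomology a (IsLocalRing.maximalIdeal R) J i M) ⊆
      PrimeSpectrum.zeroLocus (a : Set R) :=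
  statement18_general a J M i
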